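/- arXiv:1801.06060 — 3 statements merged into one kernel-verified Lean document; each statement's English description precedes it below -/
import Mathlib

section
/- Let & be a continuous t-norm on [0,1]. A map ψ : [0,1] → [0,1] is a fuzzy upper set of ([0,1],d_L) if and only if: (U1) ψ is increasing; (U2) ψ(c) < c⁻ implies ψ(c) = ψ(1); (U3) if c is not idempotent and ψ(c⁻) ≥ c⁻, then ψ(x) ≥ c⁻ for all x ∈ [c⁻,c⁺] and x ↦ min(c⁺, ψ(x)) is a fuzzy upper set of ([c⁻,c⁺], d_L^c) valued in the quantale ([c⁻,c⁺], &, c⁺), where d_L^c(x,y) = min(c⁺, x → y). -/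
open Set

/-- The unit interval as a subset of `ℝ`. -/
def I01 : Set ℝ := Set.Icc 0 1

/-- `f` is a continuous t-norm on `[0,1]`: continuous on `[0,1]²`, maps `[0,1]²` into
`[0,1]`, commutative, associative, has unit `1`, and is monotone in each argument. -/
def IsContTNorm (f : ℝ → ℝ → ℝ) : Prop :=
  ContinuousOn (fun p : ℝ × ℝ => f p.1 p.2) (I01 ×ˢ I01) ∧
  (∀ x ∈ I01, ∀ y ∈ I01, f x y ∈ I01) ∧
  (∀ x y : ℝ, f x y = f y x) ∧
  (∀ x y z : ℝ, f (f x y) z = f x (f y z)) ∧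
  (∀ x ∈ I01, f x 1 = x) ∧
  (∀ x ∈ I01, ∀ y ∈ I01, ∀ z ∈ I01, x ≤ y → f x z ≤ f y z)

/-- The implication (residuation) of a left/continuous t-norm:
`a → b = sup {q ∈ [0,1] | f a q ≤ b}`. -/
noncomputable def timp (f : ℝ → ℝ → ℝ) (a b : ℝ) : ℝ :=
  sSup {q : ℝ | q ∈ I01 ∧ f a q ≤ b}

/-- `c⁺ = inf {x ∈ [0,1] | c ≤ x, x & x = x}`. -/
noncomputable def cplus (f : ℝ → ℝ → ℝ) (c : ℝ) : ℝ :=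
  sInf {x : ℝ | x ∈ I01 ∧ c ≤ x ∧ f x x = x}

/-- `c⁻ = sup {x ∈ [0,1] | x ≤ c, x & x = x}`. -/
noncomputable def cminus (f : ℝ → ℝ → ℝ) (c : ℝ) : ℝ :=
  sSup {x : ℝ | x ∈ I01 ∧ x ≤ c ∧ f x x = x}

/-- A fuzzy lower set of `([0,1], d_L)`: `φ` maps `[0,1]` to `[0,1]` and
`φ(x) & d_L(y,x) ≤ φ(y)` where `d_L(y,x) = y → x`. -/
def IsFuzzyLowerSet (f : ℝ → ℝ → ℝ) (φ : ℝ → ℝ) : Prop :=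
  (∀ x ∈ I01, φ x ∈ I01) ∧ ∀ x ∈ I01, ∀ y ∈ I01, f (φ x) (timp f y x) ≤ φ y

/-- A fuzzy upper set of `([0,1], d_L)`: `ψ` maps `[0,1]` to `[0,1]` and
`d_L(x,y) & ψ(x) ≤ ψ(y)`. -/
def IsFuzzyUpperSet (f : ℝ → ℝ → ℝ) (ψ : ℝ → ℝ) : Prop :=
  (∀ x ∈ I01, ψ x ∈ I01) ∧ ∀ x ∈ I01, ∀ y ∈ I01, f (timp f x y) (ψ x) ≤ ψ y

/-- A fuzzy upper set of `([c⁻,c⁺], d_L^c)` valued in the quantale `([c⁻,c⁺], &, c⁺)`,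
where `d_L^c(x,y) = min (c⁺) (x → y)`. -/
def IsFuzzyUpperSetOn (f : ℝ → ℝ → ℝ) (c : ℝ) (τ : ℝ → ℝ) : Prop :=
  (∀ x ∈ Set.Icc (cminus f c) (cplus f c), τ x ∈ Set.Icc (cminus f c) (cplus f c)) ∧
  ∀ x ∈ Set.Icc (cminus f c) (cplus f c), ∀ y ∈ Set.Icc (cminus f c) (cplus f c),
    f (min (cplus f c) (timp f x y)) (τ x) ≤ τ y

namespace TN
variable {f : ℝ → ℝ → ℝ}

lemma one_mem : (1:ℝ) ∈ I01 := ⟨zero_le_one, le_refl 1⟩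
lemma zero_mem : (0:ℝ) ∈ I01 := ⟨le_refl 0, zero_le_one⟩
lemma isClosed_I01 : IsClosed I01 := isClosed_Icc

set_option linter.unusedSectionVars false
section
variable (hf : IsContTNorm f)
include hf

lemma f_mem {a b : ℝ} (ha : a ∈ I01) (hb : b ∈ I01) : f a b ∈ I01 := hf.2.1 a ha b hb

lemma f_one {a : ℝ} (ha : a ∈ I01) : f 1 a = a := by
  rw [hf.2.2.1]; exact hf.2.2.2.2.1 a ha

lemma f_mono_left {a b c : ℝ} (ha : a ∈ I01) (hb : b ∈ I01) (hc : c ∈ I01) (h : a ≤ b) :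
    f a c ≤ f b c := hf.2.2.2.2.2 a ha b hb c hc h

lemma f_mono_right {a b c : ℝ} (ha : a ∈ I01) (hb : b ∈ I01) (hc : c ∈ I01) (h : a ≤ b) :
    f c a ≤ f c b := by
  rw [hf.2.2.1 c a, hf.2.2.1 c b]; exact f_mono_left hf ha hb hc h

lemma f_le_right {a b : ℝ} (ha : a ∈ I01) (hb : b ∈ I01) : f a b ≤ b := by
  calc f a b ≤ f 1 b := f_mono_left hf ha one_mem hb ha.2
  _ = b := f_one hf hb

lemma f_le_left {a b : ℝ} (ha : a ∈ I01) (hb : b ∈ I01) : f a b ≤ a := by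
  rw [hf.2.2.1]; exact f_le_right hf hb ha

lemma f_zero {a : ℝ} (ha : a ∈ I01) : f a 0 = 0 :=
  le_antisymm (f_le_right hf ha zero_mem) (f_mem hf ha zero_mem).1

lemma contOn_left {a : ℝ} (ha : a ∈ I01) : ContinuousOn (fun q => f a q) I01 := by
  have : (fun q => f a q) = (fun p : ℝ × ℝ => f p.1 p.2) ∘ (fun q => (a, q)) := rfl
  rw [this]
  apply hf.1.comp (Continuous.continuousOn (by continuity))
  intro q hq; exact ⟨ha, hq⟩

/-- The defining set of `timp`. -/
lemma timp_set_compact {a b : ℝ} (ha : a ∈ I01) :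
    IsCompact {q : ℝ | q ∈ I01 ∧ f a q ≤ b} := by
  have hcl : IsClosed {q : ℝ | q ∈ I01 ∧ f a q ≤ b} := by
    have := isClosed_I01.isClosed_le (contOn_left hf ha) (continuousOn_const (c := b))
    convert this using 1
  exact (isCompact_Icc (a := (0:ℝ)) (b := 1)).of_isClosed_subset hcl (fun q hq => hq.1)

lemma timp_set_nonempty {a b : ℝ} (ha : a ∈ I01) (hb : 0 ≤ b) :
    Set.Nonempty {q : ℝ | q ∈ I01 ∧ f a q ≤ b} :=
  ⟨0, zero_mem, by rw [f_zero hf ha]; exact hb⟩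

lemma timp_spec {a b : ℝ} (ha : a ∈ I01) (hb : 0 ≤ b) :
    timp f a b ∈ I01 ∧ f a (timp f a b) ≤ b :=
  (timp_set_compact hf ha).sSup_mem (timp_set_nonempty hf ha hb)

lemma timp_mem {a b : ℝ} (ha : a ∈ I01) (hb : 0 ≤ b) : timp f a b ∈ I01 :=
  (timp_spec hf ha hb).1

lemma f_timp_le {a b : ℝ} (ha : a ∈ I01) (hb : 0 ≤ b) : f a (timp f a b) ≤ b :=
  (timp_spec hf ha hb).2

lemma le_timp {a b q : ℝ} (hq : q ∈ I01) (h : f a q ≤ b) : q ≤ timp f a b :=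
  le_csSup ⟨1, fun x hx => hx.1.2⟩ ⟨hq, h⟩

lemma timp_of_le {a b : ℝ} (ha : a ∈ I01) (hb : b ∈ I01) (h : a ≤ b) : timp f a b = 1 := by
  refine le_antisymm (timp_mem hf ha hb.1).2 ?_
  exact le_timp hf one_mem (by rw [hf.2.2.2.2.1 a ha]; exact h)

lemma timp_one {b : ℝ} (hb : b ∈ I01) : timp f 1 b = b := by
  refine le_antisymm ?_ (le_timp hf hb (by rw [f_one hf hb]))
  have := f_timp_le hf one_mem hb.1
  rwa [f_one hf (timp_mem hf one_mem hb.1)] at this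


/-- The set of idempotents is closed. -/
lemma idem_isClosed : IsClosed {x : ℝ | x ∈ I01 ∧ f x x = x} := by
  have hg : ContinuousOn (fun x : ℝ => f x x) I01 := by
    have : (fun x : ℝ => f x x) = (fun p : ℝ × ℝ => f p.1 p.2) ∘ (fun x : ℝ => (x, x)) := rfl
    rw [this]
    exact hf.1.comp (Continuous.continuousOn (by continuity)) (fun x hx => ⟨hx, hx⟩)
  have h1 : IsClosed {x : ℝ | x ∈ I01 ∧ f x x ≤ x} :=
    isClosed_I01.isClosed_le hg continuousOn_id
  have h2 : IsClosed {x : ℝ | x ∈ I01 ∧ x ≤ f x x} :=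
    isClosed_I01.isClosed_le continuousOn_id hg
  have : {x : ℝ | x ∈ I01 ∧ f x x = x}
      = {x : ℝ | x ∈ I01 ∧ f x x ≤ x} ∩ {x : ℝ | x ∈ I01 ∧ x ≤ f x x} := by
    ext x
    constructor
    · rintro ⟨h1, h2⟩; exact ⟨⟨h1, le_of_eq h2⟩, ⟨h1, ge_of_eq h2⟩⟩
    · rintro ⟨⟨h1, h2⟩, ⟨_, h3⟩⟩; exact ⟨h1, le_antisymm h2 h3⟩
  rw [this]; exact h1.inter h2

lemma cminus_spec {c : ℝ} (hc : c ∈ I01) :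
    cminus f c ∈ I01 ∧ cminus f c ≤ c ∧ f (cminus f c) (cminus f c) = cminus f c := by
  have hcl : IsClosed {x : ℝ | x ∈ I01 ∧ x ≤ c ∧ f x x = x} := by
    have : {x : ℝ | x ∈ I01 ∧ x ≤ c ∧ f x x = x}
        = {x : ℝ | x ∈ I01 ∧ f x x = x} ∩ Iic c := by
      ext x; constructor
      · rintro ⟨h1, h2, h3⟩; exact ⟨⟨h1, h3⟩, h2⟩
      · rintro ⟨⟨h1, h3⟩, h2⟩; exact ⟨h1, h2, h3⟩
    rw [this]; exact (idem_isClosed hf).inter isClosed_Iic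
  have hcp : IsCompact {x : ℝ | x ∈ I01 ∧ x ≤ c ∧ f x x = x} :=
    (isCompact_Icc (a := (0:ℝ)) (b := 1)).of_isClosed_subset hcl (fun q hq => hq.1)
  have hne : Set.Nonempty {x : ℝ | x ∈ I01 ∧ x ≤ c ∧ f x x = x} :=
    ⟨0, zero_mem, hc.1, f_zero hf zero_mem⟩
  exact hcp.sSup_mem hne

lemma cplus_spec {c : ℝ} (hc : c ∈ I01) :
    cplus f c ∈ I01 ∧ c ≤ cplus f c ∧ f (cplus f c) (cplus f c) = cplus f c := by
  have hcl : IsClosed {x : ℝ | x ∈ I01 ∧ c ≤ x ∧ f x x = x} := by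
    have : {x : ℝ | x ∈ I01 ∧ c ≤ x ∧ f x x = x}
        = {x : ℝ | x ∈ I01 ∧ f x x = x} ∩ Ici c := by
      ext x; constructor
      · rintro ⟨h1, h2, h3⟩; exact ⟨⟨h1, h3⟩, h2⟩
      · rintro ⟨⟨h1, h3⟩, h2⟩; exact ⟨h1, h2, h3⟩
    rw [this]; exact (idem_isClosed hf).inter isClosed_Ici
  have hcp : IsCompact {x : ℝ | x ∈ I01 ∧ c ≤ x ∧ f x x = x} :=
    (isCompact_Icc (a := (0:ℝ)) (b := 1)).of_isClosed_subset hcl (fun q hq => hq.1)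
  have hne : Set.Nonempty {x : ℝ | x ∈ I01 ∧ c ≤ x ∧ f x x = x} := by
    refine ⟨1, one_mem, hc.2, ?_⟩
    exact hf.2.2.2.2.1 1 one_mem
  exact hcp.sInf_mem hne

omit hf in
lemma idem_le_cminus {c j : ℝ} (hj : j ∈ I01) (hjc : j ≤ c) (hidem : f j j = j) :
    j ≤ cminus f c :=
  le_csSup ⟨1, fun x hx => hx.1.2⟩ ⟨hj, hjc, hidem⟩

omit hf in
lemma cplus_le_idem {c j : ℝ} (hj : j ∈ I01) (hjc : c ≤ j) (hidem : f j j = j) :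
    cplus f c ≤ j :=
  csInf_le ⟨0, fun x hx => hx.1.1⟩ ⟨hj, hjc, hidem⟩

lemma cminus_idem_self {c : ℝ} (hc : c ∈ I01) (hidem : f c c = c) : cminus f c = c :=
  le_antisymm (cminus_spec hf hc).2.1 (idem_le_cminus hc (le_refl c) hidem)

/-- Key continuity fact: for an idempotent `e` and `x ≤ e`, `f e x = x`. -/
lemma f_idem_absorb {e x : ℝ} (he : e ∈ I01) (hidem : f e e = e) (hx : x ∈ I01)
    (hxe : x ≤ e) : f e x = x := by
  have hg : ContinuousOn (fun q => f e q) (Icc 0 e) :=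
    (contOn_left hf he).mono (fun t ht => ⟨ht.1, le_trans ht.2 he.2⟩)
  have hiv := intermediate_value_Icc he.1 hg
  have hx' : x ∈ Icc (f e 0) (f e e) := by
    rw [f_zero hf he, hidem]; exact ⟨hx.1, hxe⟩
  obtain ⟨t, ht, hft⟩ := hiv hx'
  have hft : f e t = x := hft
  have ht01 : t ∈ I01 := ⟨ht.1, le_trans ht.2 he.2⟩
  calc f e x = f e (f e t) := by rw [hft]
  _ = f (f e e) t := by rw [hf.2.2.2.1]
  _ = f e t := by rw [hidem]
  _ = x := hft

/-- If `x ≤ e ≤ y` with `e` idempotent, then `f y x = x`. -/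
lemma f_absorb_of_between {e x y : ℝ} (he : e ∈ I01) (hidem : f e e = e)
    (hx : x ∈ I01) (hy : y ∈ I01) (hxe : x ≤ e) (hey : e ≤ y) : f y x = x := by
  refine le_antisymm (f_le_right hf hy hx) ?_
  calc x = f e x := (f_idem_absorb hf he hidem hx hxe).symm
  _ ≤ f y x := f_mono_left hf he hy hx hey


lemma timp_eq_self_of_idem {e x y : ℝ} (he : e ∈ I01) (heid : f e e = e)
    (hy : y ∈ I01) (hx : x ∈ I01) (hye : y < e) (hex : e ≤ x) : timp f x y = y := by
  refine le_antisymm ?_ (le_timp hf hy (f_le_right hf hx hy))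
  apply csSup_le (timp_set_nonempty hf hx hy.1)
  rintro q ⟨hqI, hq⟩
  by_contra hgt; push_neg at hgt
  rcases le_or_gt q e with h1 | h2
  · have h0 : f e q = q := f_idem_absorb hf he heid hqI h1
    have h0' : f e q ≤ f x q := f_mono_left hf he hx hqI hex
    rw [h0] at h0'
    linarith
  · have h3 : f e e ≤ f x e := f_mono_left hf he hx he hex
    have h4 : f x e ≤ f x q := f_mono_right hf he hqI hx (le_of_lt h2)
    rw [heid] at h3
    linarith

lemma timp_le_of_idem_above {D x y : ℝ} (hD : D ∈ I01) (hDid : f D D = D)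
    (hx : x ∈ I01) (hy : y ∈ I01) (hxD : x ≤ D) (hyx : y < x) : timp f x y ≤ D := by
  apply csSup_le (timp_set_nonempty hf hx hy.1)
  rintro q ⟨hqI, hq⟩
  by_contra hgt; push_neg at hgt
  have h1 : f q x = x := f_absorb_of_between hf hD hDid hx hqI hxD (le_of_lt hgt)
  rw [hf.2.2.1 x q, h1] at hq
  linarith

end
end TN

/-- characterization of fuzzy upper sets of `([0,1], d_L)` for a general
continuous t-norm, via conditions (U1)-(U3). -/
theorem fuzzy_upper_set_characterization (f : ℝ → ℝ → ℝ) (hf : IsContTNorm f)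
    (ψ : ℝ → ℝ) (hψ : ∀ x ∈ I01, ψ x ∈ I01) :
    IsFuzzyUpperSet f ψ ↔
    ((∀ a ∈ I01, ∀ b ∈ I01, a ≤ b → ψ a ≤ ψ b) ∧
     (∀ c ∈ I01, ψ c < cminus f c → ψ c = ψ 1) ∧
     (∀ c ∈ I01, f c c ≠ c → cminus f c ≤ ψ (cminus f c) →
       (∀ x ∈ Set.Icc (cminus f c) (cplus f c), cminus f c ≤ ψ x) ∧
       IsFuzzyUpperSetOn f c (fun x => min (cplus f c) (ψ x)))) := by
  constructor
  · rintro ⟨_, hup⟩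
    have U1 : ∀ a ∈ I01, ∀ b ∈ I01, a ≤ b → ψ a ≤ ψ b := by
      intro a ha b hb hab
      have h := hup a ha b hb
      rwa [TN.timp_of_le hf ha hb hab, TN.f_one hf (hψ a ha)] at h
    refine ⟨U1, ?_, ?_⟩
    · -- U2
      intro c hc hlt
      obtain ⟨heI, hec, heid⟩ := TN.cminus_spec hf hc
      have hψ1 := hψ 1 TN.one_mem
      have h1 := hup 1 TN.one_mem c hc
      rw [TN.timp_one hf hc] at h1
      rcases le_or_gt (ψ 1) (cminus f c) with hcase | hcase
      · have h2 : f (cminus f c) (ψ 1) = ψ 1 := TN.f_idem_absorb hf heI heid hψ1 hcase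
        have h3 : f (cminus f c) (ψ 1) ≤ f c (ψ 1) := TN.f_mono_left hf heI hc hψ1 hec
        rw [h2] at h3
        exact le_antisymm (U1 c hc 1 TN.one_mem hc.2) (le_trans h3 h1)
      · exfalso
        have h2 : f (ψ 1) (cminus f c) = cminus f c :=
          TN.f_absorb_of_between hf heI heid heI hψ1 (le_refl _) (le_of_lt hcase)
        have h3 : f (cminus f c) (ψ 1) ≤ f c (ψ 1) := TN.f_mono_left hf heI hc hψ1 hec
        rw [hf.2.2.1 (cminus f c) (ψ 1), h2] at h3
        linarith
    · -- U3
      intro c hc _ hge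
      obtain ⟨heI, hec, heid⟩ := TN.cminus_spec hf hc
      obtain ⟨hEI, hcE, hEid⟩ := TN.cplus_spec hf hc
      have heE : cminus f c ≤ cplus f c := le_trans hec hcE
      have hmemI : ∀ z ∈ Icc (cminus f c) (cplus f c), z ∈ I01 :=
        fun z hz => ⟨le_trans heI.1 hz.1, le_trans hz.2 hEI.2⟩
      have hlb : ∀ z ∈ Icc (cminus f c) (cplus f c), cminus f c ≤ ψ z := by
        intro z hz
        exact le_trans hge (U1 _ heI z (hmemI z hz) hz.1)
      refine ⟨hlb, ?_, ?_⟩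
      · intro z hz
        exact ⟨le_min heE (hlb z hz), min_le_left _ _⟩
      · intro x hx y hy
        have hxI := hmemI x hx
        have hyI := hmemI y hy
        have hψx := hψ x hxI
        have hrI : timp f x y ∈ I01 := TN.timp_mem hf hxI hyI.1
        have hminrI : min (cplus f c) (timp f x y) ∈ I01 :=
          ⟨le_min hEI.1 hrI.1, le_trans (min_le_left _ _) hEI.2⟩
        have hminψI : min (cplus f c) (ψ x) ∈ I01 :=
          ⟨le_min hEI.1 hψx.1, le_trans (min_le_left _ _) hEI.2⟩
        refine le_min ?_ ?_
        · exact le_trans (TN.f_le_right hf hminrI hminψI) (min_le_left _ _)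
        · calc f (min (cplus f c) (timp f x y)) (min (cplus f c) (ψ x))
              ≤ f (timp f x y) (min (cplus f c) (ψ x)) :=
                TN.f_mono_left hf hminrI hrI hminψI (min_le_right _ _)
          _ ≤ f (timp f x y) (ψ x) :=
                TN.f_mono_right hf hminψI hψx hrI (min_le_right _ _)
          _ ≤ ψ y := hup x hxI y hyI
  · rintro ⟨U1, U2, U3⟩
    refine ⟨hψ, ?_⟩
    intro x hx y hy
    have hψx := hψ x hx
    have hψy := hψ y hy
    rcases le_or_gt x y with hxy | hyx
    · rw [TN.timp_of_le hf hx hy hxy, TN.f_one hf hψx]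
      exact U1 x hx y hy hxy
    · have hrI : timp f x y ∈ I01 := TN.timp_mem hf hx hy.1
      have hfr_le : f (timp f x y) (ψ x) ≤ ψ x := TN.f_le_right hf hrI hψx
      rcases le_or_gt (cminus f x) y with hB | hA
      · -- Case B : cminus f x ≤ y < x
        obtain ⟨hdI, hdx, hdid⟩ := TN.cminus_spec hf hx
        obtain ⟨hDI, hxD, hDid⟩ := TN.cplus_spec hf hx
        have hxne : f x x ≠ x := by
          intro h
          have h2 : x ≤ cminus f x := TN.idem_le_cminus hx (le_refl x) h
          linarith
        rcases lt_or_ge (ψ y) (cminus f x) with hB1 | hB2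
        · have hylt : ψ y < cminus f y := lt_of_lt_of_le hB1 (TN.idem_le_cminus hdI hB hdid)
          have heq := U2 y hy hylt
          calc f (timp f x y) (ψ x) ≤ ψ x := hfr_le
            _ ≤ ψ 1 := U1 x hx 1 TN.one_mem hx.2
            _ = ψ y := heq.symm
        · have hψd : cminus f x ≤ ψ (cminus f x) := by
            by_contra hlt; push_neg at hlt
            have h1 : ψ (cminus f x) < cminus f (cminus f x) := by
              rwa [TN.cminus_idem_self hf hdI hdid]
            have h2 := U2 (cminus f x) hdI h1
            have h3 : ψ y ≤ ψ 1 := U1 y hy 1 TN.one_mem hy.2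
            linarith
          obtain ⟨hτrange, hτ⟩ := (U3 x hx hxne hψd).2
          have hyIcc : y ∈ Icc (cminus f x) (cplus f x) := ⟨hB, le_trans (le_of_lt hyx) hxD⟩
          have hxIcc : x ∈ Icc (cminus f x) (cplus f x) := ⟨le_trans hB (le_of_lt hyx), hxD⟩
          have hkey := hτ x hxIcc y hyIcc
          simp only at hkey
          have hrD : timp f x y ≤ cplus f x :=
            TN.timp_le_of_idem_above hf hDI hDid hx hy hxD hyx
          rw [min_eq_right hrD] at hkey
          have hend : min (cplus f x) (ψ y) ≤ ψ y := min_le_right _ _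
          rcases le_or_gt (ψ x) (cplus f x) with hc1 | hc2
          · rw [min_eq_right hc1] at hkey
            exact hkey.trans hend
          · have h1 : f (timp f x y) (ψ x) ≤ timp f x y := TN.f_le_left hf hrI hψx
            have h2 : f (cplus f x) (timp f x y) = timp f x y :=
              TN.f_idem_absorb hf hDI hDid hrI hrD
            rw [min_eq_left (le_of_lt hc2)] at hkey
            rw [hf.2.2.1 (timp f x y) (cplus f x), h2] at hkey
            exact le_trans h1 (hkey.trans hend)
      · -- Case A : y < cminus f x ≤ x
        obtain ⟨heI', hex, heid'⟩ := TN.cminus_spec hf hx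
        have hry : timp f x y = y := TN.timp_eq_self_of_idem hf heI' heid' hy hx hA hex
        rcases le_or_gt y (ψ y) with hy1 | hy2
        · calc f (timp f x y) (ψ x) ≤ timp f x y := TN.f_le_left hf hrI hψx
            _ = y := hry
            _ ≤ ψ y := hy1
        · rcases lt_or_ge (ψ y) (cminus f y) with hy3 | hy4
          · have heq := U2 y hy hy3
            calc f (timp f x y) (ψ x) ≤ ψ x := hfr_le
              _ ≤ ψ 1 := U1 x hx 1 TN.one_mem hx.2
              _ = ψ y := heq.symm
          · obtain ⟨hdI, hdy, hdid⟩ := TN.cminus_spec hf hy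
            obtain ⟨hDI, hyD, hDid⟩ := TN.cplus_spec hf hy
            have hyne : f y y ≠ y := by
              intro h
              rw [TN.cminus_idem_self hf hy h] at hy4
              linarith
            have hyD' : y < cplus f y := by
              rcases lt_or_eq_of_le hyD with h | h
              · exact h
              · exact absurd (h ▸ hDid) hyne
            have hψd : cminus f y ≤ ψ (cminus f y) := by
              by_contra hlt; push_neg at hlt
              have h1 : ψ (cminus f y) < cminus f (cminus f y) := by
                rwa [TN.cminus_idem_self hf hdI hdid]
              have h2 := U2 (cminus f y) hdI h1
              have h3 : ψ y ≤ ψ 1 := U1 y hy 1 TN.one_mem hy.2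
              linarith
            obtain ⟨hτrange, hτ⟩ := (U3 y hy hyne hψd).2
            have hDIcc : cplus f y ∈ Icc (cminus f y) (cplus f y) :=
              ⟨le_trans hdy hyD, le_refl _⟩
            have hyIcc : y ∈ Icc (cminus f y) (cplus f y) := ⟨hdy, hyD⟩
            have hkey := hτ (cplus f y) hDIcc y hyIcc
            simp only at hkey
            have htDy : timp f (cplus f y) y = y :=
              TN.timp_eq_self_of_idem hf hDI hDid hy hDI hyD' (le_refl _)
            rw [htDy, min_eq_right hyD] at hkey
            rw [min_eq_right (le_trans (le_of_lt hy2) hyD)] at hkey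
            have hψDI := hψ (cplus f y) hDI
            have hψD : ψ (cplus f y) < cplus f y := by
              by_contra hge2; push_neg at hge2
              rw [min_eq_left hge2] at hkey
              have h4 : f (cplus f y) y = y :=
                TN.f_idem_absorb hf hDI hDid hy hyD
              rw [hf.2.2.1 y (cplus f y), h4] at hkey
              linarith
            rw [min_eq_right (le_of_lt hψD)] at hkey
            have hψDlt : ψ (cplus f y) < cminus f (cplus f y) := by
              rwa [TN.cminus_idem_self hf hDI hDid]
            have hψD1 := U2 (cplus f y) hDI hψDlt
            have hψxle : ψ x ≤ ψ (cplus f y) := by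
              rw [hψD1]; exact U1 x hx 1 TN.one_mem hx.2
            calc f (timp f x y) (ψ x) = f y (ψ x) := by rw [hry]
              _ ≤ f y (ψ (cplus f y)) := TN.f_mono_right hf hψx hψDI hy hψxle
              _ ≤ ψ y := hkey
end

section
/- Let & be a continuous t-norm on [0,1] and φ a flat ideal in ([0,1],d_L). Then for each c ∈ [0,1], if φ(c) ≥ c⁺ then φ(c) is idempotent (φ(c) & φ(c) = φ(c)). -/
open Set

/-- The tensor product `φ ⊗ ψ = sup_{x ∈ [0,1]} φ x & ψ x`. -/
noncomputable def tensor (f : ℝ → ℝ → ℝ) (φ ψ : ℝ → ℝ) : ℝ :=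
  sSup ((fun x => f (φ x) (ψ x)) '' I01)

/-- A flat ideal in `([0,1], d_L)`: an inhabited fuzzy lower set `φ` such that
`φ ⊗ (ψ₁ ∧ ψ₂) = (φ ⊗ ψ₁) ∧ (φ ⊗ ψ₂)` for all fuzzy upper sets `ψ₁, ψ₂`. -/
def IsFlatIdeal (f : ℝ → ℝ → ℝ) (φ : ℝ → ℝ) : Prop :=
  IsFuzzyLowerSet f φ ∧ (1 : ℝ) ≤ sSup (φ '' I01) ∧
  ∀ ψ₁ ψ₂ : ℝ → ℝ, IsFuzzyUpperSet f ψ₁ → IsFuzzyUpperSet f ψ₂ →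
    tensor f φ (fun x => min (ψ₁ x) (ψ₂ x)) = min (tensor f φ ψ₁) (tensor f φ ψ₂)


section Aux

variable {f : ℝ → ℝ → ℝ}

lemma I01_zero : (0:ℝ) ∈ I01 := ⟨le_refl 0, zero_le_one⟩
lemma I01_one : (1:ℝ) ∈ I01 := ⟨zero_le_one, le_refl 1⟩

lemma isClosed_I01 : IsClosed I01 := isClosed_Icc

lemma tn_mono2 (hf : IsContTNorm f) {x y z : ℝ} (hx : x ∈ I01) (hy : y ∈ I01)
    (hz : z ∈ I01) (h : y ≤ z) : f x y ≤ f x z := by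
  rw [hf.2.2.1 x y, hf.2.2.1 x z]
  exact hf.2.2.2.2.2 y hy z hz x hx h

lemma tn_one_left (hf : IsContTNorm f) {x : ℝ} (hx : x ∈ I01) : f 1 x = x := by
  rw [hf.2.2.1]; exact hf.2.2.2.2.1 x hx

lemma tn_zero_right (hf : IsContTNorm f) {x : ℝ} (hx : x ∈ I01) : f x 0 = 0 := by
  have h1 : f x 0 ≤ f 1 0 := hf.2.2.2.2.2 x hx 1 I01_one 0 I01_zero hx.2
  have h2 : f 1 0 = 0 := tn_one_left hf I01_zero
  have h3 : f x 0 ∈ I01 := hf.2.1 x hx 0 I01_zero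
  linarith [h3.1]

lemma tn_contOn_left (hf : IsContTNorm f) {a : ℝ} (ha : a ∈ I01) :
    ContinuousOn (fun q => f a q) I01 := by
  have : (fun q => f a q) = (fun p : ℝ × ℝ => f p.1 p.2) ∘ (fun q => (a, q)) := rfl
  rw [this]
  exact hf.1.comp (Continuous.continuousOn (by fun_prop)) (fun q hq => ⟨ha, hq⟩)

lemma tn_contOn_diag (hf : IsContTNorm f) :
    ContinuousOn (fun x => f x x) I01 := by
  have : (fun x => f x x) = (fun p : ℝ × ℝ => f p.1 p.2) ∘ (fun x => (x, x)) := rfl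
  rw [this]
  exact hf.1.comp (Continuous.continuousOn (by fun_prop)) (fun q hq => ⟨hq, hq⟩)

lemma timp_set_nonempty (hf : IsContTNorm f) {a b : ℝ} (ha : a ∈ I01) (hb0 : 0 ≤ b) :
    {q : ℝ | q ∈ I01 ∧ f a q ≤ b}.Nonempty :=
  ⟨0, I01_zero, by rw [tn_zero_right hf ha]; exact hb0⟩

lemma timp_set_bddAbove {a b : ℝ} : BddAbove {q : ℝ | q ∈ I01 ∧ f a q ≤ b} :=
  ⟨1, fun q hq => hq.1.2⟩

lemma timp_mem_set (hf : IsContTNorm f) {a b : ℝ} (ha : a ∈ I01) (hb : b ∈ I01) :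
    timp f a b ∈ {q : ℝ | q ∈ I01 ∧ f a q ≤ b} := by
  have hcl : IsClosed {q : ℝ | q ∈ I01 ∧ f a q ≤ b} := by
    have heq : {q : ℝ | q ∈ I01 ∧ f a q ≤ b} = I01 ∩ (fun q => f a q) ⁻¹' (Set.Iic b) := by
      ext q; simp [Set.mem_Iic]
    rw [heq]
    exact (tn_contOn_left hf ha).preimage_isClosed_of_isClosed isClosed_I01 isClosed_Iic
  exact hcl.csSup_mem (timp_set_nonempty hf ha hb.1) timp_set_bddAbove

lemma timp_mem' (hf : IsContTNorm f) {a b : ℝ} (ha : a ∈ I01) (hb : b ∈ I01) :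
    timp f a b ∈ I01 := (timp_mem_set hf ha hb).1

lemma timp_spec (hf : IsContTNorm f) {a b : ℝ} (ha : a ∈ I01) (hb : b ∈ I01) :
    f a (timp f a b) ≤ b := (timp_mem_set hf ha hb).2

lemma le_timp {a b q : ℝ} (hq : q ∈ I01) (hfq : f a q ≤ b) : q ≤ timp f a b :=
  le_csSup timp_set_bddAbove ⟨hq, hfq⟩

lemma timp_of_le (hf : IsContTNorm f) {a b : ℝ} (ha : a ∈ I01) (hb : b ∈ I01)
    (hab : a ≤ b) : timp f a b = 1 := by
  refine le_antisymm (Real.sSup_le (fun q hq => hq.1.2) zero_le_one) ?_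
  exact le_timp I01_one (by rw [hf.2.2.2.2.1 a ha]; exact hab)

lemma timp_comp (hf : IsContTNorm f) {c x y : ℝ} (hc : c ∈ I01) (hx : x ∈ I01)
    (hy : y ∈ I01) : f (timp f x y) (timp f c x) ≤ timp f c y := by
  set u := timp f x y with hu
  set v := timp f c x with hv
  have hui : u ∈ I01 := timp_mem' hf hx hy
  have hvi : v ∈ I01 := timp_mem' hf hc hx
  have huv : f u v ∈ I01 := hf.2.1 u hui v hvi
  refine le_timp huv ?_
  have h1 : f c (f u v) = f (f c v) u := by
    rw [hf.2.2.1 u v, ← hf.2.2.2.1]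
  rw [h1]
  have h2 : f (f c v) u ≤ f x u :=
    hf.2.2.2.2.2 (f c v) (hf.2.1 c hc v hvi) x hx u hui (timp_spec hf hc hx)
  exact h2.trans (timp_spec hf hx hy)

/-- Fact: if `e` is idempotent and `a ≤ e` then `f e a = a`. -/
lemma tn_idem_min (hf : IsContTNorm f) {e a : ℝ} (he : e ∈ I01) (ha : a ∈ I01)
    (hee : f e e = e) (hae : a ≤ e) : f e a = a := by
  have hiv := intermediate_value_Icc (zero_le_one' ℝ) (tn_contOn_left hf he)
  have h0 : f e 0 = 0 := tn_zero_right hf he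
  have h1 : f e 1 = e := hf.2.2.2.2.1 e he
  have hmem : a ∈ Set.Icc (f e 0) (f e 1) := by rw [h0, h1]; exact ⟨ha.1, hae⟩
  obtain ⟨y, hy, hfy'⟩ := hiv hmem
  have hfy : f e y = a := hfy'
  calc f e a = f e (f e y) := by rw [hfy]
    _ = f (f e e) y := (hf.2.2.2.1 e e y).symm
    _ = f e y := by rw [hee]
    _ = a := hfy

/-- If `f b t = t` then there is an idempotent `L` with `t ≤ L ≤ b`. -/
lemma exists_idem_between (hf : IsContTNorm f) {b t : ℝ} (hb : b ∈ I01) (ht : t ∈ I01)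
    (heq : f b t = t) : ∃ L, L ∈ I01 ∧ f L L = L ∧ L ≤ b ∧ t ≤ L := by
  set pow : ℕ → ℝ := fun n => (f b)^[n] b with hpow
  have hpow_succ : ∀ n, pow (n + 1) = f b (pow n) := by
    intro n
    simp only [hpow, Function.iterate_succ', Function.comp_apply]
  have hmem : ∀ n, pow n ∈ I01 := by
    intro n
    induction n with
    | zero => exact hb
    | succ n ih => rw [hpow_succ]; exact hf.2.1 b hb _ ih
  have hanti : Antitone pow := by
    apply antitone_nat_of_succ_le
    intro n
    rw [hpow_succ]
    calc f b (pow n) ≤ f 1 (pow n) :=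
          hf.2.2.2.2.2 b hb 1 I01_one (pow n) (hmem n) hb.2
      _ = pow n := tn_one_left hf (hmem n)
  have hbdd : BddBelow (Set.range pow) := ⟨0, fun x ⟨n, hn⟩ => hn ▸ (hmem n).1⟩
  set L := ⨅ n, pow n with hL
  have htend : Filter.Tendsto pow Filter.atTop (nhds L) := tendsto_atTop_ciInf hanti hbdd
  have hLI : L ∈ I01 := isClosed_I01.mem_of_tendsto htend (Filter.Eventually.of_forall hmem)
  have hLb : L ≤ b := ciInf_le hbdd 0
  -- f (pow n) t = t for all n
  have hft : ∀ n, f (pow n) t = t := by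
    intro n
    induction n with
    | zero => exact heq
    | succ n ih => rw [hpow_succ, hf.2.2.2.1, ih, heq]
  -- limit: f L t = t
  have hcw : ∀ {z w : ℝ} (g : ℕ → ℝ) (hg : Filter.Tendsto g Filter.atTop (nhds z))
      (hgm : ∀ n, g n ∈ I01) (hz : z ∈ I01) (hw : w ∈ I01),
      Filter.Tendsto (fun n => f (g n) w) Filter.atTop (nhds (f z w)) := by
    intro z w g hg hgm hz hw
    have h1 : Filter.Tendsto (fun n => ((g n, w) : ℝ × ℝ)) Filter.atTop (nhds (z, w)) :=
      hg.prodMk_nhds tendsto_const_nhds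
    have h2 : Filter.Tendsto (fun n => ((g n, w) : ℝ × ℝ)) Filter.atTop
        (nhdsWithin (z, w) (I01 ×ˢ I01)) :=
      tendsto_nhdsWithin_of_tendsto_nhds_of_eventually_within _ h1
        (Filter.Eventually.of_forall fun n => ⟨hgm n, hw⟩)
    have h3 : Filter.Tendsto (fun p : ℝ × ℝ => f p.1 p.2)
        (nhdsWithin (z, w) (I01 ×ˢ I01)) (nhds (f z w)) := hf.1 (z, w) ⟨hz, hw⟩
    exact h3.comp h2
  have hfLt : f L t = t := by
    have h3 := hcw pow htend hmem hLI ht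
    have h4 : Filter.Tendsto (fun n => f (pow n) t) Filter.atTop (nhds t) := by
      simp only [hft]; exact tendsto_const_nhds
    exact tendsto_nhds_unique h3 h4
  have htL : t ≤ L := by
    have : f L t ≤ f L 1 := tn_mono2 hf hLI ht I01_one ht.2
    rw [hf.2.2.2.2.1 L hLI] at this
    linarith [hfLt ▸ this]
  -- idempotency of L
  have hpows : ∀ n m, f (pow n) (pow m) = pow (n + m + 1) := by
    intro n
    induction n with
    | zero =>
      intro m
      have h0 : pow 0 = b := rfl
      have he1 : 0 + m + 1 = m + 1 := by omega
      rw [h0, he1, hpow_succ]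
    | succ n ih =>
      intro m
      rw [hpow_succ, hf.2.2.2.1, ih m, ← hpow_succ]
      congr 1
      omega
  have hdiag : Filter.Tendsto (fun n => f (pow n) (pow n)) Filter.atTop (nhds (f L L)) := by
    have h1 : Filter.Tendsto (fun n => ((pow n, pow n) : ℝ × ℝ)) Filter.atTop (nhds (L, L)) :=
      htend.prodMk_nhds htend
    have h2 : Filter.Tendsto (fun n => ((pow n, pow n) : ℝ × ℝ)) Filter.atTop
        (nhdsWithin (L, L) (I01 ×ˢ I01)) :=
      tendsto_nhdsWithin_of_tendsto_nhds_of_eventually_within _ h1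
        (Filter.Eventually.of_forall fun n => ⟨hmem n, hmem n⟩)
    have h3 : Filter.Tendsto (fun p : ℝ × ℝ => f p.1 p.2)
        (nhdsWithin (L, L) (I01 ×ˢ I01)) (nhds (f L L)) := hf.1 (L, L) ⟨hLI, hLI⟩
    exact h3.comp h2
  have hdiag2 : Filter.Tendsto (fun n => f (pow n) (pow n)) Filter.atTop (nhds L) := by
    have heq2 : (fun n => f (pow n) (pow n)) = fun n => pow (n + n + 1) := by
      funext n; exact hpows n n
    rw [heq2]
    have hsub : Filter.Tendsto (fun n => n + n + 1) Filter.atTop (Filter.atTop : Filter ℕ) :=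
      Filter.tendsto_atTop_atTop_of_monotone (fun a b hab => by omega) (fun b => ⟨b, by omega⟩)
    exact htend.comp hsub
  exact ⟨L, hLI, tendsto_nhds_unique hdiag hdiag2, hLb, htL⟩

end Aux

/-- for a flat ideal `φ` in `([0,1],d_L)`, if `φ c ≥ c⁺` then `φ c` is
idempotent. -/
theorem flat_ideal_value_idempotent (f : ℝ → ℝ → ℝ) (hf : IsContTNorm f)
    (φ : ℝ → ℝ) (hφ : IsFlatIdeal f φ)
    (c : ℝ) (hc : c ∈ I01) (h : cplus f c ≤ φ c) :
    f (φ c) (φ c) = φ c := by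
  obtain ⟨⟨hφmap, hφlow⟩, hφsup, hφflat⟩ := hφ
  by_contra hne
  set b := φ c with hbdef
  have hbI : b ∈ I01 := hφmap c hc
  -- the set of idempotents above c, and `c⁺`
  have hUne : {x : ℝ | x ∈ I01 ∧ c ≤ x ∧ f x x = x}.Nonempty :=
    ⟨1, I01_one, hc.2, by rw [hf.2.2.2.2.1 1 I01_one]⟩
  have hUbdd : BddBelow {x : ℝ | x ∈ I01 ∧ c ≤ x ∧ f x x = x} :=
    ⟨0, fun x hx => hx.1.1⟩
  have hUcl : IsClosed {x : ℝ | x ∈ I01 ∧ c ≤ x ∧ f x x = x} := by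
    have heq : {x : ℝ | x ∈ I01 ∧ c ≤ x ∧ f x x = x}
        = (I01 ∩ Set.Ici c) ∩ (fun x => f x x - x) ⁻¹' {0} := by
      ext x
      simp only [Set.mem_setOf_eq, Set.mem_inter_iff, Set.mem_preimage,
        Set.mem_Ici, Set.mem_singleton_iff, sub_eq_zero]
      tauto
    rw [heq]
    exact (((tn_contOn_diag hf).mono Set.inter_subset_left).sub
      continuousOn_id).preimage_isClosed_of_isClosed
      (isClosed_I01.inter isClosed_Ici) isClosed_singleton
  have hcpU : cplus f c ∈ {x : ℝ | x ∈ I01 ∧ c ≤ x ∧ f x x = x} :=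
    hUcl.csInf_mem hUne hUbdd
  have hcpc : c ≤ cplus f c := hcpU.2.1
  -- the set of idempotents below b, and its sup `p`
  have hTne : {x : ℝ | x ∈ I01 ∧ x ≤ b ∧ f x x = x}.Nonempty :=
    ⟨0, I01_zero, hbI.1, tn_zero_right hf I01_zero⟩
  have hTbdd : BddAbove {x : ℝ | x ∈ I01 ∧ x ≤ b ∧ f x x = x} :=
    ⟨1, fun x hx => hx.1.2⟩
  have hTcl : IsClosed {x : ℝ | x ∈ I01 ∧ x ≤ b ∧ f x x = x} := by
    have heq : {x : ℝ | x ∈ I01 ∧ x ≤ b ∧ f x x = x}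
        = (I01 ∩ Set.Iic b) ∩ (fun x => f x x - x) ⁻¹' {0} := by
      ext x
      simp only [Set.mem_setOf_eq, Set.mem_inter_iff, Set.mem_preimage,
        Set.mem_Iic, Set.mem_singleton_iff, sub_eq_zero]
      tauto
    rw [heq]
    exact (((tn_contOn_diag hf).mono Set.inter_subset_left).sub
      continuousOn_id).preimage_isClosed_of_isClosed
      (isClosed_I01.inter isClosed_Iic) isClosed_singleton
  set p := sSup {x : ℝ | x ∈ I01 ∧ x ≤ b ∧ f x x = x} with hpdef
  have hpT : p ∈ {x : ℝ | x ∈ I01 ∧ x ≤ b ∧ f x x = x} :=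
    hTcl.csSup_mem hTne hTbdd
  have hpI : p ∈ I01 := hpT.1
  have hpb : p ≤ b := hpT.2.1
  have hpp : f p p = p := hpT.2.2
  have hcple : cplus f c ≤ p := le_csSup hTbdd ⟨hcpU.1, h, hcpU.2.2⟩
  have hcp : c ≤ p := hcpc.trans hcple
  have hpbne : p < b := lt_of_le_of_ne hpb (fun he => hne (by rw [← he]; exact hpp))
  -- choose t strictly between p and b
  set t := (p + b) / 2 with htdef
  have hptt : p < t := by rw [htdef]; linarith
  have htb : t < b := by rw [htdef]; linarith
  have htI : t ∈ I01 := ⟨le_trans hpI.1 hptt.le, le_trans htb.le hbI.2⟩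
  -- f b t < t
  have hfbt_le : f b t ≤ t := by
    calc f b t ≤ f 1 t := hf.2.2.2.2.2 b hbI 1 I01_one t htI hbI.2
      _ = t := tn_one_left hf htI
  have hfbt : f b t < t := by
    rcases hfbt_le.lt_or_eq with h1 | h1
    · exact h1
    · exfalso
      obtain ⟨L, hLI, hLL, hLb, htL⟩ := exists_idem_between hf hbI htI h1
      have hLp : L ≤ p := le_csSup hTbdd ⟨hLI, hLb, hLL⟩
      linarith
  -- the two fuzzy upper sets
  have h1u : IsFuzzyUpperSet f (fun _ => t) := by
    refine ⟨fun x _ => htI, fun x hx y hy => ?_⟩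
    calc f (timp f x y) t ≤ f 1 t :=
          hf.2.2.2.2.2 _ (timp_mem' hf hx hy) 1 I01_one t htI (timp_mem' hf hx hy).2
      _ = t := tn_one_left hf htI
  have h2u : IsFuzzyUpperSet f (timp f c) :=
    ⟨fun x hx => timp_mem' hf hc hx, fun x hx y hy => timp_comp hf hc hx hy⟩
  have hflat := hφflat _ _ h1u h2u
  -- φ 0 = 1
  have hφle0 : ∀ x ∈ I01, φ x ≤ φ 0 := by
    intro x hx
    have h0 := hφlow x hx 0 I01_zero
    rwa [timp_of_le hf I01_zero hx hx.1, hf.2.2.2.2.1 _ (hφmap x hx)] at h0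
  have hφ0 : φ 0 = 1 := by
    have hle : sSup (φ '' I01) ≤ φ 0 :=
      Real.sSup_le (by rintro y ⟨x, hx, rfl⟩; exact hφle0 x hx) (hφmap 0 I01_zero).1
    exact le_antisymm (hφmap 0 I01_zero).2 (le_trans hφsup hle)
  -- lower bounds for the two tensors
  have hbdd1 : BddAbove ((fun x => f (φ x) ((fun _ => t) x)) '' I01) := by
    refine ⟨1, ?_⟩
    rintro y ⟨x, hx, rfl⟩
    exact (hf.2.1 _ (hφmap x hx) t htI).2
  have hR1 : t ≤ tensor f φ (fun _ => t) := by
    have hel : f (φ 0) t = t := by rw [hφ0, tn_one_left hf htI]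
    calc t = f (φ 0) t := hel.symm
      _ ≤ tensor f φ (fun _ => t) := le_csSup hbdd1 ⟨0, I01_zero, rfl⟩
  have hbdd2 : BddAbove ((fun x => f (φ x) (timp f c x)) '' I01) := by
    refine ⟨1, ?_⟩
    rintro y ⟨x, hx, rfl⟩
    exact (hf.2.1 _ (hφmap x hx) _ (timp_mem' hf hc hx)).2
  have hR2 : t ≤ tensor f φ (timp f c) := by
    have hel : f (φ c) (timp f c c) = b := by
      rw [timp_of_le hf hc hc (le_refl c), hf.2.2.2.2.1 _ hbI]
    calc t ≤ b := htb.le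
      _ = f (φ c) (timp f c c) := hel.symm
      _ ≤ tensor f φ (timp f c) := le_csSup hbdd2 ⟨c, hc, rfl⟩
  -- upper bound for the tensor of the min
  have hM : tensor f φ (fun x => min ((fun _ => t) x) (timp f c x)) ≤ max (f b t) p := by
    refine Real.sSup_le ?_ (le_trans hpI.1 (le_max_right _ _))
    rintro y ⟨x, hx, rfl⟩
    show f (φ x) (min t (timp f c x)) ≤ max (f b t) p
    have htimpI : timp f c x ∈ I01 := timp_mem' hf hc hx
    have hmI : min t (timp f c x) ∈ I01 :=
      ⟨le_min htI.1 htimpI.1, (min_le_left _ _).trans htI.2⟩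
    rcases le_or_gt c x with hcx | hxc
    · have h1 : f (φ x) (min t (timp f c x)) ≤ f (φ x) t :=
        tn_mono2 hf (hφmap x hx) hmI htI (min_le_left _ _)
      have h2 : φ x ≤ φ c := by
        have h0 := hφlow x hx c hc
        rwa [timp_of_le hf hc hx hcx, hf.2.2.2.2.1 _ (hφmap x hx)] at h0
      have h3 : f (φ x) t ≤ f b t :=
        hf.2.2.2.2.2 _ (hφmap x hx) b hbI t htI h2
      exact le_max_of_le_left (h1.trans h3)
    · have htp : timp f c x ≤ p := by
        refine Real.sSup_le ?_ hpI.1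
        rintro q ⟨hqI, hq⟩
        by_contra hqp
        push_neg at hqp
        have hcfq : c ≤ f c q := by
          have h4 : f p c = c := tn_idem_min hf hpI hc hpp hcp
          calc c = f p c := h4.symm
            _ = f c p := hf.2.2.1 p c
            _ ≤ f c q := tn_mono2 hf hc hpI hqI hqp.le
        linarith
      have h1 : f (φ x) (min t (timp f c x)) ≤ f 1 (min t (timp f c x)) :=
        hf.2.2.2.2.2 _ (hφmap x hx) 1 I01_one _ hmI (hφmap x hx).2
      rw [tn_one_left hf hmI] at h1
      exact le_max_of_le_right (h1.trans ((min_le_right _ _).trans htp))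
  -- contradiction
  have hcontra : t ≤ max (f b t) p := by
    calc t ≤ min (tensor f φ (fun _ => t)) (tensor f φ (timp f c)) := le_min hR1 hR2
      _ = tensor f φ (fun x => min ((fun _ => t) x) (timp f c x)) := hflat.symm
      _ ≤ max (f b t) p := hM
  have hlt : max (f b t) p < t := max_lt hfbt hptt
  linarith
end

section
/- Let & be a continuous t-norm on [0,1], let φ be a fuzzy lower set of ([0,1],d_L) satisfying: (F2) for each c, φ(c) ≥ c⁺ implies φ(c) is idempotent, and (F3) for each non-idempotent c with φ(c⁻) > c⁻, the map x ↦ min(c⁺,φ(x)) is a flat ideal in ([c⁻,c⁺],d_L^c) valued in ([c⁻,c⁺],&,c⁺). Set K_φ = {x ∈ [0,1] : φ(x) ≥ x⁺}. Then for every fuzzy upper set ψ of ([0,1],d_L), φ⊗ψ = sup_{x∈K_φ} min(φ(x), ψ(x)). -/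
open Set

/-- A fuzzy lower set of `([c⁻,c⁺], d_L^c)` valued in `([c⁻,c⁺], &, c⁺)`. -/
def IsFuzzyLowerSetOn (f : ℝ → ℝ → ℝ) (c : ℝ) (σ : ℝ → ℝ) : Prop :=
  (∀ x ∈ Set.Icc (cminus f c) (cplus f c), σ x ∈ Set.Icc (cminus f c) (cplus f c)) ∧
  ∀ x ∈ Set.Icc (cminus f c) (cplus f c), ∀ y ∈ Set.Icc (cminus f c) (cplus f c),
    f (σ x) (min (cplus f c) (timp f y x)) ≤ σ y

/-- The tensor product in `([c⁻,c⁺], &, c⁺)`. -/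
noncomputable def tensorOn (f : ℝ → ℝ → ℝ) (c : ℝ) (σ τ : ℝ → ℝ) : ℝ :=
  sSup ((fun x => f (σ x) (τ x)) '' Set.Icc (cminus f c) (cplus f c))

/-- A flat ideal in `([c⁻,c⁺], d_L^c)` valued in `([c⁻,c⁺], &, c⁺)`: an inhabited
fuzzy lower set `σ` (`sup σ = c⁺`, the unit) that is flat. -/
def IsFlatIdealOn (f : ℝ → ℝ → ℝ) (c : ℝ) (σ : ℝ → ℝ) : Prop :=
  IsFuzzyLowerSetOn f c σ ∧
  cplus f c ≤ sSup (σ '' Set.Icc (cminus f c) (cplus f c)) ∧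
  ∀ τ₁ τ₂ : ℝ → ℝ, IsFuzzyUpperSetOn f c τ₁ → IsFuzzyUpperSetOn f c τ₂ →
    tensorOn f c σ (fun x => min (τ₁ x) (τ₂ x)) =
      min (tensorOn f c σ τ₁) (tensorOn f c σ τ₂)

/-! Each term `φ c & ψ c` of `φ ⊗ ψ` is bounded by `min (φ x) (ψ x)` for some `x ∈ K_φ` with
`φ c ≤ φ x` and `c & φ c ≤ x`; the latter gives `φ c ≤ c → x`, hence `φ c & ψ c ≤ ψ x`.
If `c⁺ ≤ φ c`, take `x = c`. If `c⁻ < φ c < c⁺`, (F3) makes `σ = min c⁺ φ` a flat ideal of the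
block `[c⁻, c⁺]`, and `x` is the top `u` of its plateau `{σ = c⁺}`: flatness, tested on the
principal upper set `c →^c -` and the constant `σ c`, gives `c & σ c ≤ u`, because no idempotent
lies strictly inside the block. If `φ c ≤ c⁻`, the same argument in the block of `d = φ c`
shows `d ∈ K_φ`, and `x = d` works. Conversely, (F2) makes `&` agree with `min` on `K_φ`. -/

lemma zero_mem_I01 : (0 : ℝ) ∈ I01 := ⟨le_rfl, zero_le_one⟩

lemma one_mem_I01 : (1 : ℝ) ∈ I01 := ⟨zero_le_one, le_rfl⟩

lemma cplus_le {f : ℝ → ℝ → ℝ} {c e : ℝ} (he : e ∈ I01) (hce : c ≤ e) (hee : f e e = e) :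
    cplus f c ≤ e :=
  csInf_le ⟨0, fun _ hx => hx.1.1⟩ ⟨he, hce, hee⟩

lemma le_cminus {f : ℝ → ℝ → ℝ} {c e : ℝ} (he : e ∈ I01) (hec : e ≤ c) (hee : f e e = e) :
    e ≤ cminus f c :=
  le_csSup ⟨1, fun _ hx => hx.1.2⟩ ⟨he, hec, hee⟩

lemma not_idem_of_mem_Ioo {f : ℝ → ℝ → ℝ} {c e : ℝ} (he : e ∈ I01)
    (he' : e ∈ Ioo (cminus f c) (cplus f c)) : f e e ≠ e := by
  intro hee
  rcases le_total e c with h | h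
  · exact (le_cminus he h hee).not_gt he'.1
  · exact (cplus_le he h hee).not_gt he'.2

namespace IsContTNorm

variable {f : ℝ → ℝ → ℝ} (hf : IsContTNorm f)
include hf

lemma mul_mem {x y : ℝ} (hx : x ∈ I01) (hy : y ∈ I01) : f x y ∈ I01 := hf.2.1 x hx y hy

lemma comm (x y : ℝ) : f x y = f y x := hf.2.2.1 x y

lemma assoc (x y z : ℝ) : f (f x y) z = f x (f y z) := hf.2.2.2.1 x y z

lemma mul_one {x : ℝ} (hx : x ∈ I01) : f x 1 = x := hf.2.2.2.2.1 x hx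

lemma mono_left {x y z : ℝ} (hx : x ∈ I01) (hy : y ∈ I01) (hz : z ∈ I01) (h : x ≤ y) :
    f x z ≤ f y z :=
  hf.2.2.2.2.2 x hx y hy z hz h

lemma mono_right {x y z : ℝ} (hx : x ∈ I01) (hy : y ∈ I01) (hz : z ∈ I01) (h : y ≤ z) :
    f x y ≤ f x z := by
  rw [hf.comm x y, hf.comm x z]
  exact hf.mono_left hy hz hx h

lemma mul_le_left {x y : ℝ} (hx : x ∈ I01) (hy : y ∈ I01) : f x y ≤ x :=
  (hf.mono_right hx hy one_mem_I01 hy.2).trans_eq (hf.mul_one hx)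

lemma mul_le_right {x y : ℝ} (hx : x ∈ I01) (hy : y ∈ I01) : f x y ≤ y :=
  hf.comm x y ▸ hf.mul_le_left hy hx

lemma mul_zero {x : ℝ} (hx : x ∈ I01) : f x 0 = 0 :=
  le_antisymm (hf.mul_le_right hx zero_mem_I01) (hf.mul_mem hx zero_mem_I01).1

lemma continuousOn_mul_left {a : ℝ} (ha : a ∈ I01) : ContinuousOn (f a) I01 :=
  hf.1.comp (continuous_const.prodMk continuous_id).continuousOn fun _ hq => ⟨ha, hq⟩

lemma bddAbove_image_mul {s : Set ℝ} {σ τ : ℝ → ℝ} (hσ : ∀ x ∈ s, σ x ∈ I01)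
    (hτ : ∀ x ∈ s, τ x ∈ I01) : BddAbove ((fun x => f (σ x) (τ x)) '' s) := by
  refine ⟨1, ?_⟩
  rintro _ ⟨x, hx, rfl⟩
  exact (hf.mul_mem (hσ x hx) (hτ x hx)).2

lemma timp_mem {a b : ℝ} (ha : a ∈ I01) (hb : 0 ≤ b) : timp f a b ∈ I01 :=
  ⟨le_csSup ⟨1, fun _ hq => hq.1.2⟩ ⟨zero_mem_I01, (hf.mul_zero ha).trans_le hb⟩,
    csSup_le ⟨0, zero_mem_I01, (hf.mul_zero ha).trans_le hb⟩ fun _ hq => hq.1.2⟩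

lemma mul_timp_le {a b : ℝ} (ha : a ∈ I01) (hb : 0 ≤ b) : f a (timp f a b) ≤ b := by
  have hclosed : IsClosed (I01 ∩ f a ⁻¹' Iic b) :=
    (hf.continuousOn_mul_left ha).preimage_isClosed_of_isClosed isClosed_Icc isClosed_Iic
  have hcompact : IsCompact (I01 ∩ f a ⁻¹' Iic b) :=
    isCompact_Icc.of_isClosed_subset hclosed inter_subset_left
  exact (hcompact.sSup_mem ⟨0, zero_mem_I01, (hf.mul_zero ha).trans_le hb⟩).2

lemma le_timp_iff {a b q : ℝ} (ha : a ∈ I01) (hb : 0 ≤ b) (hq : q ∈ I01) :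
    q ≤ timp f a b ↔ f a q ≤ b :=
  ⟨fun h => (hf.mono_right ha hq (hf.timp_mem ha hb) h).trans (hf.mul_timp_le ha hb),
    fun h => le_csSup ⟨1, fun _ hq => hq.1.2⟩ ⟨hq, h⟩⟩

lemma timp_eq_one {a b : ℝ} (ha : a ∈ I01) (h : a ≤ b) : timp f a b = 1 :=
  le_antisymm (hf.timp_mem ha (ha.1.trans h)).2
    ((hf.le_timp_iff ha (ha.1.trans h) one_mem_I01).2 ((hf.mul_one ha).trans_le h))

lemma timp_mono_right {a b b' : ℝ} (ha : a ∈ I01) (hb : 0 ≤ b) (h : b ≤ b') :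
    timp f a b ≤ timp f a b' :=
  (hf.le_timp_iff ha (hb.trans h) (hf.timp_mem ha hb)).2 ((hf.mul_timp_le ha hb).trans h)

lemma le_timp_self {a x : ℝ} (ha : a ∈ I01) (hx : x ∈ I01) : x ≤ timp f a x :=
  (hf.le_timp_iff ha hx.1 hx).2 (hf.mul_le_right ha hx)

lemma idem_mul_eq_min {e x : ℝ} (he : e ∈ I01) (hee : f e e = e) (hx : x ∈ I01) :
    f e x = min e x := by
  rcases le_total e x with h | h
  · rw [min_eq_left h]
    exact le_antisymm (hf.mul_le_left he hx) (hee.symm.trans_le (hf.mono_right he he hx h))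
  · rw [min_eq_right h]
    obtain ⟨s, -, hs⟩ := intermediate_value_Icc he.1
      ((hf.continuousOn_mul_left he).mono (Icc_subset_Icc le_rfl he.2))
      (show x ∈ Icc (f e 0) (f e e) by rw [hf.mul_zero he, hee]; exact ⟨hx.1, h⟩)
    rw [← hs, ← hf.assoc, hee]

/-- The least `e ≤ a` with `z & e = z` is idempotent, since `e & e` is another such element. -/
lemma exists_idem_between {a z : ℝ} (ha : a ∈ I01) (hz : z ∈ I01) (h : f z a = z) :
    ∃ e ∈ I01, f e e = e ∧ z ≤ e ∧ e ≤ a := by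
  set T := Icc 0 a ∩ f z ⁻¹' {z}
  have hT : IsCompact T := isCompact_Icc.of_isClosed_subset
    (((hf.continuousOn_mul_left hz).mono (Icc_subset_Icc le_rfl ha.2)).preimage_isClosed_of_isClosed
      isClosed_Icc isClosed_singleton) inter_subset_left
  obtain ⟨⟨he0, hea⟩, hze⟩ := hT.sInf_mem ⟨a, ⟨ha.1, le_rfl⟩, h⟩
  set e := sInf T
  have heI : e ∈ I01 := ⟨he0, hea.trans ha.2⟩
  have hee_mem : f e e ∈ T :=
    ⟨⟨(hf.mul_mem heI heI).1, (hf.mul_le_left heI heI).trans hea⟩,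
      show f z (f e e) = z by rw [← hf.assoc, hze, hze]⟩
  refine ⟨e, heI, le_antisymm (hf.mul_le_left heI heI) (csInf_le ⟨0, fun x hx => hx.1.1⟩ hee_mem),
    ?_, hea⟩
  exact hze.symm.trans_le (hf.mul_le_right hz heI)

lemma isCompact_idem : IsCompact {x | x ∈ I01 ∧ f x x = x} := by
  have hcont : ContinuousOn (fun x => f x x - x) I01 :=
    (hf.1.comp (continuous_id.prodMk continuous_id).continuousOn fun _ hx => ⟨hx, hx⟩).sub
      continuousOn_id
  refine isCompact_Icc.of_isClosed_subset ?_ fun x hx => hx.1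
  convert hcont.preimage_isClosed_of_isClosed isClosed_Icc (isClosed_singleton (x := 0)) using 1
  ext x
  simp [sub_eq_zero]

lemma cplus_mem {c : ℝ} (hc : c ∈ I01) :
    cplus f c ∈ I01 ∧ c ≤ cplus f c ∧ f (cplus f c) (cplus f c) = cplus f c := by
  have h := (hf.isCompact_idem.inter_right isClosed_Ici).sInf_mem
    ⟨1, ⟨one_mem_I01, hf.mul_one one_mem_I01⟩, hc.2⟩
  have hset : {x | x ∈ I01 ∧ f x x = x} ∩ Ici c = {x | x ∈ I01 ∧ c ≤ x ∧ f x x = x} := by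
    ext x
    exact and_right_comm.trans and_assoc
  rw [hset] at h
  exact h

lemma cminus_mem {c : ℝ} (hc : c ∈ I01) :
    cminus f c ∈ I01 ∧ cminus f c ≤ c ∧ f (cminus f c) (cminus f c) = cminus f c := by
  have h := (hf.isCompact_idem.inter_right isClosed_Iic).sSup_mem
    ⟨0, ⟨zero_mem_I01, hf.mul_zero zero_mem_I01⟩, hc.1⟩
  have hset : {x | x ∈ I01 ∧ f x x = x} ∩ Iic c = {x | x ∈ I01 ∧ x ≤ c ∧ f x x = x} := by
    ext x
    exact and_right_comm.trans and_assoc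
  rw [hset] at h
  exact h

lemma cplus_eq_self {c : ℝ} (hc : c ∈ I01) (hcc : f c c = c) : cplus f c = c :=
  le_antisymm (cplus_le hc le_rfl hcc) (hf.cplus_mem hc).2.1

lemma cminus_eq_self {c : ℝ} (hc : c ∈ I01) (hcc : f c c = c) : cminus f c = c :=
  le_antisymm (hf.cminus_mem hc).2.1 (le_cminus hc le_rfl hcc)

lemma cminus_lt_self {c : ℝ} (hc : c ∈ I01) (hcc : f c c ≠ c) : cminus f c < c :=
  (hf.cminus_mem hc).2.1.lt_of_ne fun h => hcc (h ▸ (hf.cminus_mem hc).2.2)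

lemma cminus_le_cplus {c : ℝ} (hc : c ∈ I01) : cminus f c ≤ cplus f c :=
  (hf.cminus_mem hc).2.1.trans (hf.cplus_mem hc).2.1

lemma Icc_cminus_cplus_subset {c : ℝ} (hc : c ∈ I01) : Icc (cminus f c) (cplus f c) ⊆ I01 :=
  fun _ hx => ⟨(hf.cminus_mem hc).1.1.trans hx.1, hx.2.trans (hf.cplus_mem hc).1.2⟩

lemma cplus_mul_of_le {c v : ℝ} (hc : c ∈ I01) (hv : v ∈ I01) (h : v ≤ cplus f c) :
    f (cplus f c) v = v := by
  rw [hf.idem_mul_eq_min (hf.cplus_mem hc).1 (hf.cplus_mem hc).2.2 hv, min_eq_right h]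

/-- If `y & q = y`, an idempotent lies between `y` and `q`, hence strictly inside `(c⁻, c⁺)`. -/
lemma mul_lt_self {c y q : ℝ} (hc : c ∈ I01) (hy : y ∈ Ioc (cminus f c) (cplus f c))
    (hq : q ∈ I01) (hqc : q < cplus f c) : f y q < y := by
  have hyI : y ∈ I01 := hf.Icc_cminus_cplus_subset hc (Ioc_subset_Icc_self hy)
  refine (hf.mul_le_left hyI hq).lt_of_ne fun h => ?_
  obtain ⟨e, heI, hee, hye, heq⟩ := hf.exists_idem_between hq hyI h
  exact not_idem_of_mem_Ioo heI ⟨hy.1.trans_le hye, heq.trans_lt hqc⟩ hee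

lemma min_cplus_timp_mem {c a b : ℝ} (hc : c ∈ I01) (ha : a ∈ I01) (hb : 0 ≤ b) :
    min (cplus f c) (timp f a b) ∈ I01 :=
  ⟨le_min (hf.cplus_mem hc).1.1 (hf.timp_mem ha hb).1,
    (min_le_left _ _).trans (hf.cplus_mem hc).1.2⟩

lemma isFuzzyUpperSetOn_const {c k : ℝ} (hc : c ∈ I01) (hk : k ∈ Icc (cminus f c) (cplus f c)) :
    IsFuzzyUpperSetOn f c (fun _ => k) :=
  have hsub := hf.Icc_cminus_cplus_subset hc
  ⟨fun _ _ => hk, fun _ hx _ hy =>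
    hf.mul_le_right (hf.min_cplus_timp_mem hc (hsub hx) (hsub hy).1) (hsub hk)⟩

lemma isFuzzyUpperSetOn_timp {c y : ℝ} (hc : c ∈ I01) (hy : y ∈ Icc (cminus f c) (cplus f c)) :
    IsFuzzyUpperSetOn f c (fun x => min (cplus f c) (timp f y x)) := by
  have hsub := hf.Icc_cminus_cplus_subset hc
  refine ⟨fun x hx => ⟨le_min (hf.cminus_le_cplus hc)
    (hx.1.trans (hf.le_timp_self (hsub hy) (hsub hx))), min_le_left _ _⟩, fun x hx x' hx' => ?_⟩
  have hm₁ := hf.min_cplus_timp_mem hc (hsub hx) (hsub hx').1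
  have hm₂ := hf.min_cplus_timp_mem hc (hsub hy) (hsub hx).1
  refine le_min ((hf.mul_le_right hm₁ hm₂).trans (min_le_left _ _))
    ((hf.le_timp_iff (hsub hy) (hsub hx').1 (hf.mul_mem hm₁ hm₂)).2 ?_)
  calc f y (f (min (cplus f c) (timp f x x')) (min (cplus f c) (timp f y x)))
      = f (f y (min (cplus f c) (timp f y x))) (min (cplus f c) (timp f x x')) := by
        rw [hf.comm (min _ (timp f x x')), hf.assoc]
    _ ≤ f x (min (cplus f c) (timp f x x')) :=
        hf.mono_left (hf.mul_mem (hsub hy) hm₂) (hsub hx) hm₁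
          ((hf.le_timp_iff (hsub hy) (hsub hx).1 hm₂).1 (min_le_right _ _))
    _ ≤ x' := (hf.le_timp_iff (hsub hx) (hsub hx').1 hm₁).1 (min_le_right _ _)

end IsContTNorm

def plateau (f : ℝ → ℝ → ℝ) (c : ℝ) (σ : ℝ → ℝ) : Set ℝ :=
  {x | x ∈ Icc (cminus f c) (cplus f c) ∧ σ x = cplus f c}

noncomputable def plateauTop (f : ℝ → ℝ → ℝ) (c : ℝ) (σ : ℝ → ℝ) : ℝ :=
  sSup (plateau f c σ)

lemma bddAbove_plateau {f : ℝ → ℝ → ℝ} {c : ℝ} {σ : ℝ → ℝ} : BddAbove (plateau f c σ) :=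
  ⟨cplus f c, fun _ hx => hx.1.2⟩

section

variable {f : ℝ → ℝ → ℝ} {c : ℝ} {σ : ℝ → ℝ}

namespace IsFuzzyLowerSetOn

variable (hf : IsContTNorm f) (hc : c ∈ I01) (hσ : IsFuzzyLowerSetOn f c σ)
include hf hc hσ

lemma antitoneOn : AntitoneOn σ (Icc (cminus f c) (cplus f c)) := by
  intro x hx y hy hxy
  have hsub := hf.Icc_cminus_cplus_subset hc
  have h := hσ.2 y hy x hx
  rwa [hf.timp_eq_one (hsub hx) hxy, min_eq_left (hf.cplus_mem hc).1.2, hf.comm,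
    hf.cplus_mul_of_le hc (hsub (hσ.1 y hy)) (hσ.1 y hy).2] at h

lemma tensorOn_timp {y : ℝ} (hy : y ∈ Icc (cminus f c) (cplus f c)) :
    tensorOn f c σ (fun x => min (cplus f c) (timp f y x)) = σ y := by
  have hsub := hf.Icc_cminus_cplus_subset hc
  refine le_antisymm (csSup_le ⟨_, mem_image_of_mem _ hy⟩ ?_)
    (le_csSup (hf.bddAbove_image_mul (fun x hx => hsub (hσ.1 x hx))
      fun x hx => hf.min_cplus_timp_mem hc (hsub hy) (hsub hx).1) ⟨y, hy, ?_⟩)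
  · rintro _ ⟨x, hx, rfl⟩
    exact hσ.2 x hx y hy
  · dsimp only
    rw [hf.timp_eq_one (hsub hy) le_rfl, min_eq_left (hf.cplus_mem hc).1.2, hf.comm,
      hf.cplus_mul_of_le hc (hsub (hσ.1 y hy)) (hσ.1 y hy).2]

omit hf hc in
lemma apply_lt_cplus_of_plateauTop_lt {x : ℝ} (hx : x ∈ Icc (cminus f c) (cplus f c))
    (h : plateauTop f c σ < x) : σ x < cplus f c :=
  (hσ.1 x hx).2.lt_of_ne fun h' => h.not_ge (le_csSup bddAbove_plateau ⟨hx, h'⟩)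

end IsFuzzyLowerSetOn

namespace IsFlatIdealOn

variable (hf : IsContTNorm f) (hc : c ∈ I01) (hσ : IsFlatIdealOn f c σ)
include hf hc hσ

lemma apply_cminus : σ (cminus f c) = cplus f c := by
  have hb : cminus f c ∈ Icc (cminus f c) (cplus f c) := ⟨le_rfl, hf.cminus_le_cplus hc⟩
  refine le_antisymm (hσ.1.1 _ hb).2 (hσ.2.1.trans (csSup_le ⟨_, mem_image_of_mem _ hb⟩ ?_))
  rintro _ ⟨x, hx, rfl⟩
  exact hσ.1.antitoneOn hf hc hb hx hx.1

lemma cminus_mem_plateau : cminus f c ∈ plateau f c σ :=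
  ⟨⟨le_rfl, hf.cminus_le_cplus hc⟩, hσ.apply_cminus hf hc⟩

lemma plateauTop_mem : plateauTop f c σ ∈ Icc (cminus f c) (cplus f c) :=
  ⟨le_csSup bddAbove_plateau (hσ.cminus_mem_plateau hf hc),
    csSup_le ⟨_, hσ.cminus_mem_plateau hf hc⟩ fun _ hx => hx.1.2⟩

lemma apply_plateauTop : σ (plateauTop f c σ) = cplus f c := by
  have hsub := hf.Icc_cminus_cplus_subset hc
  have hu := hσ.plateauTop_mem hf hc
  rcases hu.1.eq_or_lt with h | h
  · rw [← h]
    exact hσ.apply_cminus hf hc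
  refine le_antisymm (hσ.1.1 _ hu).2 (le_of_forall_lt_imp_le_of_dense fun q hq => ?_)
  rcases le_or_gt q (cminus f c) with hqb | hbq
  · exact hqb.trans (hσ.1.1 _ hu).1
  have hqI : q ∈ I01 := ⟨(hf.cminus_mem hc).1.1.trans hbq.le, hq.le.trans (hf.cplus_mem hc).1.2⟩
  obtain ⟨x, hx, hux⟩ := exists_lt_of_lt_csSup ⟨_, hσ.cminus_mem_plateau hf hc⟩
    (hf.mul_lt_self hc ⟨h, hu.2⟩ hqI hq)
  have hlow := hσ.1.2 x hx.1 _ hu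
  rw [hx.2, hf.cplus_mul_of_le hc (hf.min_cplus_timp_mem hc (hsub hu) (hsub hx.1).1)
    (min_le_left _ _)] at hlow
  exact (le_min hq.le ((hf.le_timp_iff (hsub hu) (hsub hx.1).1 hqI).2 hux.le)).trans hlow

lemma apply_eq_cplus_of_le_plateauTop {x : ℝ} (hx : x ∈ Icc (cminus f c) (cplus f c))
    (h : x ≤ plateauTop f c σ) : σ x = cplus f c :=
  le_antisymm (hσ.1.1 x hx).2 ((hσ.apply_plateauTop hf hc).symm.trans_le
    (hσ.1.antitoneOn hf hc hx (hσ.plateauTop_mem hf hc) h))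

lemma tensorOn_const {k : ℝ} (hk : k ∈ Icc (cminus f c) (cplus f c)) :
    tensorOn f c σ (fun _ => k) = k := by
  have hsub := hf.Icc_cminus_cplus_subset hc
  have hb : cminus f c ∈ Icc (cminus f c) (cplus f c) := ⟨le_rfl, hf.cminus_le_cplus hc⟩
  refine le_antisymm (csSup_le ⟨_, mem_image_of_mem _ hb⟩ ?_)
    (le_csSup (hf.bddAbove_image_mul (fun x hx => hsub (hσ.1.1 x hx)) fun _ _ => hsub hk)
      ⟨cminus f c, hb, ?_⟩)
  · rintro _ ⟨x, hx, rfl⟩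
    exact hf.mul_le_right (hsub (hσ.1.1 x hx)) (hsub hk)
  · dsimp only
    rw [hσ.apply_cminus hf hc, hf.cplus_mul_of_le hc (hsub hk) hk.2]

/-- Flatness on the upper sets `y →^c -` and `σ y` gives `sup_x σ x & min (y →^c x) (σ y) = σ y`.
Points `x` above `z > plateauTop` contribute at most `σ z & σ y < σ y`, so points below `z`
push `y →^c z` up to `σ y`. -/
lemma mul_apply_le_plateauTop {y : ℝ} (hy : y ∈ Icc (cminus f c) (cplus f c)) :
    f y (σ y) ≤ plateauTop f c σ := by
  have hsub := hf.Icc_cminus_cplus_subset hc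
  set u := plateauTop f c σ
  set k := σ y
  have hk : k ∈ Icc (cminus f c) (cplus f c) := hσ.1.1 y hy
  have hu := hσ.plateauTop_mem hf hc
  rcases le_or_gt k u with hku | huk
  · exact (hf.mul_le_right (hsub hy) (hsub hk)).trans hku
  refine le_of_forall_gt_imp_ge_of_dense fun z huz => ?_
  rcases le_or_gt (cplus f c) z with hBz | hzB
  · exact (hf.mul_le_right (hsub hy) (hsub hk)).trans (hk.2.trans hBz)
  have hz : z ∈ Icc (cminus f c) (cplus f c) := ⟨hu.1.trans huz.le, hzB.le⟩
  have hkz : f (σ z) k < k := by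
    rw [hf.comm]
    exact hf.mul_lt_self hc ⟨hu.1.trans_lt huk, hk.2⟩ (hsub (hσ.1.1 z hz))
      (hσ.1.apply_lt_cplus_of_plateauTop_lt hz huz)
  have hflat := hσ.2.2 _ _ (hf.isFuzzyUpperSetOn_timp hc hy) (hf.isFuzzyUpperSetOn_const hc hk)
  rw [hσ.1.tensorOn_timp hf hc hy, hσ.tensorOn_const hf hc hk, min_self] at hflat
  have hbound : ∀ x ∈ Icc (cminus f c) (cplus f c),
      f (σ x) (min (min (cplus f c) (timp f y x)) k) ≤ max (timp f y z) (f (σ z) k) := by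
    intro x hx
    have hm : min (min (cplus f c) (timp f y x)) k ∈ I01 :=
      ⟨le_min (hf.min_cplus_timp_mem hc (hsub hy) (hsub hx).1).1 (hsub hk).1,
        (min_le_right _ _).trans (hsub hk).2⟩
    rcases le_or_gt z x with hzx | hxz
    · refine le_max_of_le_right ?_
      calc f (σ x) (min (min (cplus f c) (timp f y x)) k) ≤ f (σ x) k :=
            hf.mono_right (hsub (hσ.1.1 x hx)) hm (hsub hk) (min_le_right _ _)
        _ ≤ f (σ z) k := hf.mono_left (hsub (hσ.1.1 x hx)) (hsub (hσ.1.1 z hz)) (hsub hk)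
            (hσ.1.antitoneOn hf hc hz hx hzx)
    · refine le_max_of_le_left ?_
      calc f (σ x) (min (min (cplus f c) (timp f y x)) k)
          ≤ min (min (cplus f c) (timp f y x)) k := hf.mul_le_right (hsub (hσ.1.1 x hx)) hm
        _ ≤ timp f y x := (min_le_left _ _).trans (min_le_right _ _)
        _ ≤ timp f y z := hf.timp_mono_right (hsub hy) (hsub hx).1 hxz.le
  have hk_le : k ≤ max (timp f y z) (f (σ z) k) :=
    hflat.symm.trans_le (csSup_le ⟨_, mem_image_of_mem _ hy⟩ (by
      rintro _ ⟨x, hx, rfl⟩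
      exact hbound x hx))
  exact (hf.le_timp_iff (hsub hy) (hsub hz).1 (hsub hk)).1
    ((le_max_iff.1 hk_le).resolve_right hkz.not_ge)

lemma apply_eq_cplus_of_le_apply_cplus {x : ℝ} (hx : x ∈ Icc (cminus f c) (cplus f c))
    (h : x ≤ σ (cplus f c)) : σ x = cplus f c := by
  have hB : cplus f c ∈ Icc (cminus f c) (cplus f c) := ⟨hf.cminus_le_cplus hc, le_rfl⟩
  have hBu := hσ.mul_apply_le_plateauTop hf hc hB
  rw [hf.cplus_mul_of_le hc (hf.Icc_cminus_cplus_subset hc (hσ.1.1 _ hB)) (hσ.1.1 _ hB).2] at hBu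
  exact hσ.apply_eq_cplus_of_le_plateauTop hf hc hx (h.trans hBu)

end IsFlatIdealOn

/-- Condition (F3). -/
def IsFlatOnBlocks (f : ℝ → ℝ → ℝ) (φ : ℝ → ℝ) : Prop :=
  ∀ c ∈ I01, f c c ≠ c → cminus f c < φ (cminus f c) →
    IsFlatIdealOn f c (fun x => min (cplus f c) (φ x))

namespace IsFuzzyLowerSet

variable {φ : ℝ → ℝ} (hf : IsContTNorm f) (hφ : IsFuzzyLowerSet f φ)
include hf hφ

lemma antitoneOn : AntitoneOn φ I01 := by
  intro x hx y hy hxy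
  have h := hφ.2 y hy x hx
  rwa [hf.timp_eq_one hx hxy, hf.mul_one (hφ.1 y hy)] at h

variable (hF3 : IsFlatOnBlocks f φ)
include hF3

lemma cplus_le_apply_of_le_apply_cplus {d : ℝ} (hd : d ∈ I01) (h : d ≤ φ (cplus f d)) :
    cplus f d ≤ φ d := by
  by_cases hdd : f d d = d
  · rw [hf.cplus_eq_self hd hdd] at h ⊢
    exact h
  have hB := hf.cplus_mem hd
  have hb := hf.cminus_mem hd
  have hσ := hF3 d hd hdd ((hf.cminus_lt_self hd hdd).trans_le
    (h.trans (hφ.antitoneOn hf hb.1 hB.1 (hf.cminus_le_cplus hd))))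
  exact min_eq_left_iff.1
    (hσ.apply_eq_cplus_of_le_apply_cplus hf hd ⟨hb.2.1, hB.2.1⟩ (le_min hB.2.1 h))

lemma exists_mem_K {c : ℝ} (hc : c ∈ I01) :
    ∃ x ∈ I01, cplus f x ≤ φ x ∧ φ c ≤ φ x ∧ f c (φ c) ≤ x := by
  have hφc := hφ.1 c hc
  rcases le_or_gt (cplus f c) (φ c) with hK | hK
  · exact ⟨c, hc, hK, le_rfl, hf.mul_le_left hc hφc⟩
  have hb := hf.cminus_mem hc
  have hB := hf.cplus_mem hc
  rcases le_or_gt (φ c) (cminus f c) with hφb | hbφ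
  · have hd : cplus f (φ c) ≤ c := (cplus_le hb.1 hφb hb.2.2).trans hb.2.1
    refine ⟨φ c, hφc, hφ.cplus_le_apply_of_le_apply_cplus hf hF3 hφc
      (hφ.antitoneOn hf (hf.cplus_mem hφc).1 hc hd), hφ.antitoneOn hf hφc hc (hφb.trans hb.2.1),
      hf.mul_le_right hc hφc⟩
  have hcc : f c c ≠ c := fun hcc => by
    have h := hbφ.trans hK
    rw [hf.cminus_eq_self hc hcc, hf.cplus_eq_self hc hcc] at h
    exact lt_irrefl c h
  have hσ := hF3 c hc hcc (hbφ.trans_le (hφ.antitoneOn hf hb.1 hc hb.2.1))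
  have hu := hσ.plateauTop_mem hf hc
  have hφu : cplus f c ≤ φ (plateauTop f c fun x => min (cplus f c) (φ x)) :=
    min_eq_left_iff.1 (hσ.apply_plateauTop hf hc)
  have hcu : f c (min (cplus f c) (φ c)) ≤ plateauTop f c fun x => min (cplus f c) (φ x) :=
    hσ.mul_apply_le_plateauTop hf hc ⟨hb.2.1, hB.2.1⟩
  rw [min_eq_right hK.le] at hcu
  exact ⟨_, hf.Icc_cminus_cplus_subset hc hu,
    (cplus_le hB.1 hu.2 hB.2.2).trans hφu, hK.le.trans hφu, hcu⟩

end IsFuzzyLowerSet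

lemma IsFuzzyUpperSet.mul_apply_le {ψ : ℝ → ℝ} (hf : IsContTNorm f) (hψ : IsFuzzyUpperSet f ψ)
    {c x t : ℝ} (hc : c ∈ I01) (hx : x ∈ I01) (ht : t ∈ I01) (h : f c t ≤ x) :
    f t (ψ c) ≤ ψ x :=
  (hf.mono_left ht (hf.timp_mem hc hx.1) (hψ.1 c hc) ((hf.le_timp_iff hc hx.1 ht).2 h)).trans
    (hψ.2 c hc x hx)

end

/-- if a fuzzy lower set `φ` of `([0,1],d_L)` satisfies (F2) and (F3), and
`K_φ = {x ∈ [0,1] | φ x ≥ x⁺}`, then for every fuzzy upper set `ψ` of `([0,1],d_L)`,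
`φ ⊗ ψ = sup_{x ∈ K_φ} min (φ x) (ψ x)`. -/
theorem tensor_eq_sup_over_Kphi (f : ℝ → ℝ → ℝ) (hf : IsContTNorm f)
    (φ : ℝ → ℝ) (hφ : IsFuzzyLowerSet f φ)
    (hF2 : ∀ c ∈ I01, cplus f c ≤ φ c → f (φ c) (φ c) = φ c)
    (hF3 : ∀ c ∈ I01, f c c ≠ c → cminus f c < φ (cminus f c) →
      IsFlatIdealOn f c (fun x => min (cplus f c) (φ x)))
    (ψ : ℝ → ℝ) (hψ : IsFuzzyUpperSet f ψ) :
    sSup ((fun x => f (φ x) (ψ x)) '' I01) =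
      sSup ((fun x => min (φ x) (ψ x)) '' {x | x ∈ I01 ∧ cplus f x ≤ φ x}) := by
  have hK_bdd : BddAbove ((fun x => min (φ x) (ψ x)) '' {x | x ∈ I01 ∧ cplus f x ≤ φ x}) :=
    ⟨1, by rintro _ ⟨x, hx, rfl⟩; exact (min_le_left _ _).trans (hφ.1 x hx.1).2⟩
  have h0K : (0 : ℝ) ∈ {x | x ∈ I01 ∧ cplus f x ≤ φ x} :=
    ⟨zero_mem_I01, (hf.cplus_eq_self zero_mem_I01 (hf.mul_zero zero_mem_I01)).trans_le
      (hφ.1 0 zero_mem_I01).1⟩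
  apply le_antisymm
  · refine csSup_le ⟨_, mem_image_of_mem _ zero_mem_I01⟩ ?_
    rintro _ ⟨c, hc, rfl⟩
    obtain ⟨x, hx, hxK, hφx, hcx⟩ := hφ.exists_mem_K hf hF3 hc
    exact (le_min ((hf.mul_le_left (hφ.1 c hc) (hψ.1 c hc)).trans hφx)
      (hψ.mul_apply_le hf hc hx (hφ.1 c hc) hcx)).trans (le_csSup hK_bdd ⟨x, ⟨hx, hxK⟩, rfl⟩)
  · refine csSup_le ⟨_, mem_image_of_mem _ h0K⟩ ?_
    rintro _ ⟨x, ⟨hx, hxK⟩, rfl⟩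
    exact (hf.idem_mul_eq_min (hφ.1 x hx) (hF2 x hx hxK) (hψ.1 x hx)).symm.trans_le
      (le_csSup (hf.bddAbove_image_mul hφ.1 hψ.1) ⟨x, hx, rfl⟩)
end
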